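/- arXiv:1811.03061 — 4 statements merged into one kernel-verified Lean document; each statement's English description precedes it below -/
import Mathlib

section
/- If two vertices u and v of a connected graph G have the same neighborhood (excluding each other) and are adjacent, then -1 is an eigenvalue of the distance matrix of G; if they have the same neighborhood and are not adjacent, then -2 is an eigenvalue of the distance matrix of G. -/
/-- Build the creation sequence of a threshold graph from block sizes,
starting with the given bit and alternating. -/
def blockSeq : List ℕ → Bool → List Bool
  | [], _ => []
  | a :: rest, bit => List.replicate a bit ++ blockSeq rest (!bit)

/-- The threshold graph of a creation sequence `c`: vertex `i` is adjacent to `j`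
iff they are distinct and the later of the two was added as a dominating vertex. -/
def thresholdGraph (c : List Bool) : SimpleGraph (Fin c.length) where
  Adj i j := i ≠ j ∧ c.get (max i j) = true
  symm := by
    constructor
    intro i j h
    exact ⟨h.1.symm, by rw [max_comm]; exact h.2⟩
  loopless := by
    constructor
    intro i h
    exact h.1 rfl

/-- The distance matrix of a graph, with real entries. -/
noncomputable def distMatrix {V : Type*} [Fintype V] (G : SimpleGraph V) : Matrix V V ℝ :=
  fun i j => (G.dist i j : ℝ)

/-!
If `u` and `v` are duplicates, every other vertex `w` is equidistant from them: a shortest walk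
from `v` to `w` leaves `v` through a vertex that is also a neighbour of `u` (or is `u` itself).
Hence the columns `u` and `v` of the distance matrix agree off the rows `u`, `v`, and
`e_u - e_v` is an eigenvector with eigenvalue `-d(u, v)`. Finally `d(u, v)` is `1` if `u ~ v`,
and `2` otherwise, since any neighbour of `u` is then a common neighbour.
-/

namespace SimpleGraph

variable {V : Type*} {G : SimpleGraph V} {u v w : V}

lemma Reachable.dist_le_dist_of_adj_imp_adj (hvw : G.Reachable v w) (hwv : w ≠ v)
    (hN : ∀ t, t ≠ u → G.Adj v t → G.Adj u t) :
    G.dist u w ≤ G.dist v w := by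
  obtain ⟨p, hp⟩ := hvw.exists_walk_length_eq_dist
  cases p with
  | nil => exact absurd rfl hwv
  | @cons _ t _ hvt q =>
    rw [← hp, Walk.length_cons]
    by_cases htu : t = u
    · subst htu
      exact (dist_le q).trans (Nat.le_succ _)
    · exact dist_le (Walk.cons (hN t htu hvt) q)

lemma Connected.dist_eq_dist_of_duplicate (hG : G.Connected) (hwu : w ≠ u) (hwv : w ≠ v)
    (hdup : ∀ t, t ≠ u → t ≠ v → (G.Adj u t ↔ G.Adj v t)) :
    G.dist u w = G.dist v w := by
  refine le_antisymm ((hG v w).dist_le_dist_of_adj_imp_adj hwv fun t htu hvt => ?_)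
    ((hG u w).dist_le_dist_of_adj_imp_adj hwu fun t htv hut => ?_)
  · exact (hdup t htu hvt.ne').mpr hvt
  · exact (hdup t hut.ne' htv).mp hut

lemma Reachable.dist_eq_two_of_duplicate (huv : G.Reachable u v) (hne : u ≠ v)
    (hnadj : ¬ G.Adj u v) (hdup : ∀ t, t ≠ u → t ≠ v → (G.Adj u t ↔ G.Adj v t)) :
    G.dist u v = 2 := by
  obtain ⟨p⟩ := huv
  have hut : G.Adj u p.snd := p.adj_snd (p.not_nil_of_ne hne)
  have htv : p.snd ≠ v := fun h => hnadj (h ▸ hut)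
  have hcommon : (G.commonNeighbors u v).Nonempty :=
    ⟨p.snd, hut, (hdup _ hut.ne' htv).mp hut⟩
  simp [dist, edist_eq_two_iff.mpr ⟨hne, hnadj, hcommon⟩]

lemma distMatrix_mulVec_single_sub_single [Fintype V] [DecidableEq V]
    (hdist : ∀ w, w ≠ u → w ≠ v → G.dist u w = G.dist v w) :
    (distMatrix G).mulVec (Pi.single u 1 - Pi.single v 1) =
      (-(G.dist u v : ℝ)) • (Pi.single u 1 - Pi.single v 1) := by
  ext i
  rw [Matrix.mulVec_sub, Matrix.mulVec_single_one, Matrix.mulVec_single_one]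
  by_cases hiu : i = u
  · subst hiu
    by_cases hiv : i = v
    · subst hiv; simp
    · simp [distMatrix, hiv, dist_comm]
  by_cases hiv : i = v
  · subst hiv; simp [distMatrix, hiu, dist_comm]
  · simp [distMatrix, hiu, hiv, dist_comm, hdist i hiu hiv]

end SimpleGraph

open SimpleGraph in
theorem distMatrix_eigenvalue_of_duplicate_general {V : Type*} [Fintype V]
    (G : SimpleGraph V) (hG : G.Connected) (u v : V) (huv : u ≠ v)
    (hdup : ∀ w, w ≠ u → w ≠ v → (G.Adj u w ↔ G.Adj v w)) :
    (G.Adj u v → ∃ x : V → ℝ, x ≠ 0 ∧ (distMatrix G).mulVec x = (-1 : ℝ) • x) ∧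
    (¬ G.Adj u v → ∃ x : V → ℝ, x ≠ 0 ∧ (distMatrix G).mulVec x = (-2 : ℝ) • x) := by
  classical
  set x : V → ℝ := Pi.single u 1 - Pi.single v 1
  have hx : x ≠ 0 := fun h => by simpa [x, huv] using congrFun h u
  have heig : (distMatrix G).mulVec x = (-(G.dist u v : ℝ)) • x :=
    distMatrix_mulVec_single_sub_single fun _ hwu hwv =>
      hG.dist_eq_dist_of_duplicate hwu hwv hdup
  refine ⟨fun hadj => ⟨x, hx, ?_⟩, fun hnadj => ⟨x, hx, ?_⟩⟩
  · rw [heig, dist_eq_one_iff_adj.mpr hadj, Nat.cast_one]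
  · rw [heig, (hG u v).dist_eq_two_of_duplicate huv hnadj hdup, Nat.cast_two]

/-- If two vertices of a connected graph have the same neighborhood (excluding each
other), then -1 (if they are adjacent) resp. -2 (if not) is an eigenvalue of the
distance matrix. -/
theorem distMatrix_eigenvalue_of_duplicate {V : Type*} [Fintype V] [DecidableEq V]
    (G : SimpleGraph V) (hG : G.Connected) (u v : V) (huv : u ≠ v)
    (hdup : ∀ w, w ≠ u → w ≠ v → (G.Adj u w ↔ G.Adj v w)) :
    (G.Adj u v → ∃ x : V → ℝ, x ≠ 0 ∧ (distMatrix G).mulVec x = (-1 : ℝ) • x) ∧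
    (¬ G.Adj u v → ∃ x : V → ℝ, x ≠ 0 ∧ (distMatrix G).mulVec x = (-2 : ℝ) • x) :=
  distMatrix_eigenvalue_of_duplicate_general G hG u v huv hdup
end

section
/- For a connected threshold graph G = (0^{a_1} 1^{a_2} 0^{a_3} ... 0^{a_{n-1}} 1^{a_n}) with all a_i positive integers, the multiplicity of -2 as an eigenvalue of the distance matrix of G is at least the sum over i of (a_{2i-1} - 1), where the sum runs over all odd-indexed blocks. -/
open Matrix

lemma Matrix.card_le_rootMultiplicity_charpoly {K n ι : Type*} [Field K] [Fintype n]
    [DecidableEq n] [Fintype ι] (A : Matrix n n K) (μ : K) {v : ι → n → K}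
    (hli : LinearIndependent K v) (hv : ∀ i, A *ᵥ v i = μ • v i) :
    Fintype.card ι ≤ A.charpoly.rootMultiplicity μ := by
  have hspan : Submodule.span K (Set.range v) ≤ Module.End.eigenspace (toLin' A) μ := by
    rw [Submodule.span_le]
    rintro _ ⟨i, rfl⟩
    rw [SetLike.mem_coe, Module.End.mem_eigenspace_iff, toLin'_apply]
    exact hv i
  calc Fintype.card ι = Module.finrank K (Submodule.span K (Set.range v)) :=
        (finrank_span_eq_card hli).symm
    _ ≤ Module.finrank K (Module.End.eigenspace (toLin' A) μ) := Submodule.finrank_mono hspan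
    _ ≤ A.charpoly.rootMultiplicity μ := by
        simpa only [charpoly_toLin'] using LinearMap.finrank_eigenspace_le (toLin' A) μ

lemma linearIndependent_single_sub_single {K n ι : Type*} [Ring K] [Nontrivial K]
    [DecidableEq n] {f g : ι → n} (hf : Function.Injective f) (hfg : ∀ s t, f s ≠ g t) :
    LinearIndependent K fun s => (Pi.single (f s) 1 - Pi.single (g s) 1 : n → K) := by
  classical
  rw [linearIndependent_iff']
  intro S c hc i hi
  have hg : ∀ s, (if f i = g s then (1 : K) else 0) = 0 := fun s => if_neg (hfg i s)
  simpa [Pi.single_apply, hf.eq_iff, hg, hi] using congrFun hc (f i)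

namespace SimpleGraph

variable {V : Type*} {G : SimpleGraph V} {u v w : V}

lemma dist_le_dist_of_neighborSet_subset (h : G.neighborSet u ⊆ G.neighborSet v)
    (hr : G.Reachable u w) (hw : u ≠ w) : G.dist v w ≤ G.dist u w := by
  obtain ⟨p, hp⟩ := hr.exists_walk_length_eq_dist
  cases p with
  | nil => exact absurd rfl hw
  | cons ha q =>
    calc G.dist v w ≤ (Walk.cons (show G.Adj v _ from h ha) q).length := dist_le _
    _ = G.dist u w := by simp [← hp]

lemma dist_eq_dist_of_neighborSet_eq (hG : G.Preconnected) (h : G.neighborSet u = G.neighborSet v)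
    (hwu : w ≠ u) (hwv : w ≠ v) : G.dist u w = G.dist v w :=
  le_antisymm (dist_le_dist_of_neighborSet_subset h.ge (hG v w) hwv.symm)
    (dist_le_dist_of_neighborSet_subset h.le (hG u w) hwu.symm)

lemma dist_eq_two_of_neighborSet_eq (hG : G.Preconnected) (huv : u ≠ v)
    (h : G.neighborSet u = G.neighborSet v) : G.dist u v = 2 := by
  have hnadj : ¬ G.Adj u v := fun hadj => G.irrefl (show v ∈ G.neighborSet v from h ▸ hadj)
  obtain ⟨p⟩ := hG u v
  cases p with
  | nil => exact absurd rfl huv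
  | cons hx _ =>
    have hcommon : (G.commonNeighbors u v).Nonempty :=
      ⟨_, hx, show _ ∈ G.neighborSet v from h ▸ hx⟩
    simp [dist, edist_eq_two_iff.mpr ⟨huv, hnadj, hcommon⟩]

end SimpleGraph

lemma distMatrix_mulVec_single_sub_single {V : Type*} [Fintype V] [DecidableEq V]
    {G : SimpleGraph V} (hG : G.Preconnected) {u v : V} (huv : u ≠ v)
    (h : G.neighborSet u = G.neighborSet v) :
    distMatrix G *ᵥ (Pi.single u 1 - Pi.single v 1) =
      (-2 : ℝ) • (Pi.single u 1 - Pi.single v 1) := by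
  have hdist := G.dist_eq_two_of_neighborSet_eq hG huv h
  ext w
  simp only [mulVec_sub, mulVec_single_one, Pi.sub_apply, col_apply, distMatrix, Pi.smul_apply,
    smul_eq_mul, Pi.single_apply]
  by_cases hwu : w = u
  · subst hwu
    simp [huv, hdist]
  by_cases hwv : w = v
  · subst hwv
    simp [huv.symm, G.dist_comm, hdist]
  simp [hwu, hwv, G.dist_comm, G.dist_eq_dist_of_neighborSet_eq hG h hwu hwv]

lemma blockSeq_length (l : List ℕ) (b : Bool) : (blockSeq l b).length = l.sum := by
  induction l generalizing b with
  | nil => rfl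
  | cons a rest ih => simp [blockSeq, ih]

lemma getElem?_blockSeq (l : List ℕ) (b : Bool) {j k : ℕ} (hj : j < l.length) (hk : k < l[j]) :
    (blockSeq l b)[(l.take j).sum + k]? = some (if Even j then b else !b) := by
  induction j generalizing l b with
  | zero =>
    cases l with
    | nil => simp at hj
    | cons a rest =>
      simp_all [blockSeq, List.getElem?_append_left]
  | succ j ih =>
    cases l with
    | nil => simp at hj
    | cons a rest =>
      simp only [List.length_cons, Nat.add_lt_add_iff_right, List.getElem_cons_succ] at hj hk
      rw [blockSeq, List.take_succ_cons, List.sum_cons, List.getElem?_append_right (by simp; omega),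
        List.length_replicate, show a + (rest.take j).sum + k - a = (rest.take j).sum + k by omega,
        ih rest (!b) hj hk]
      cases b <;> simp [Nat.even_add_one, -Nat.not_even_iff_odd]

lemma List.sum_take_add_inj {l : List ℕ} {j j' k k' : ℕ} (hj : j < l.length) (hj' : j' < l.length)
    (hk : k < l[j]) (hk' : k' < l[j'])
    (h : (l.take j).sum + k = (l.take j').sum + k') : j = j' ∧ k = k' := by
  have key : ∀ {i i'} (hi : i < l.length), i < i' → (l.take i).sum + l[i] ≤ (l.take i').sum :=
    fun hi hii' => List.sum_take_succ l _ hi ▸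
      ((List.take_prefix_take_left hii').sublist.sum_le_sum fun _ _ => Nat.zero_le _)
  rcases lt_trichotomy j j' with hlt | rfl | hlt
  · have := key hj hlt; omega
  · omega
  · have := key hj' hlt; omega

lemma getLast?_blockSeq (l : List ℕ) (b : Bool) (hl : l ≠ []) (hpos : 0 < l.getLast hl) :
    (blockSeq l b).getLast? = some (if Even (l.length - 1) then b else !b) := by
  have hj : l.length - 1 < l.length := by simpa [Nat.pos_iff_ne_zero] using hl
  have hsum : l.sum = (l.take (l.length - 1)).sum + l[l.length - 1] := by
    rw [← List.sum_take_succ _ _ hj, Nat.sub_add_cancel hj.pos, List.take_length]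
  rw [List.getLast_eq_getElem] at hpos
  rw [List.getLast?_eq_getElem?, blockSeq_length, hsum, Nat.add_sub_assoc (show 1 ≤ _ from hpos),
    getElem?_blockSeq l b hj (Nat.sub_lt hpos one_pos)]

lemma thresholdGraph_adj_iff {cs : List Bool} {u v : Fin cs.length} :
    (thresholdGraph cs).Adj u v ↔ u ≠ v ∧ cs.get (max u v) = true := Iff.rfl

lemma thresholdGraph_neighborSet_eq {cs : List Bool} {u v : Fin cs.length} (huv : u ≤ v)
    (h : ∀ k : ℕ, u ≤ k → k ≤ v → cs[k]? = some false) :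
    (thresholdGraph cs).neighborSet u = (thresholdGraph cs).neighborSet v := by
  ext x
  simp only [SimpleGraph.mem_neighborSet, thresholdGraph_adj_iff]
  rcases lt_or_ge v x with hvx | hxv
  · rw [max_eq_right (huv.trans hvx.le), max_eq_right hvx.le]
    exact ⟨fun hx => ⟨hvx.ne, hx.2⟩, fun hx => ⟨(huv.trans_lt hvx).ne, hx.2⟩⟩
  · have hfalse : ∀ w : Fin cs.length, u ≤ w → w ≤ v → cs.get w = false := fun w huw hwv => by
      simpa using h w huw hwv
    rw [hfalse (max u x) (le_max_left u x) (max_le huv hxv),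
      hfalse (max v x) (huv.trans (le_max_left v x)) (max_le le_rfl hxv)]
    simp

lemma thresholdGraph_connected {cs : List Bool} (h : cs.getLast? = some true) :
    (thresholdGraph cs).Connected := by
  rw [List.getLast?_eq_getElem?, List.getElem?_eq_some_iff] at h
  obtain ⟨hlen, hlast⟩ := h
  set last : Fin cs.length := ⟨cs.length - 1, hlen⟩
  have hreach : ∀ x, (thresholdGraph cs).Reachable x last := by
    intro x
    rcases eq_or_ne x last with rfl | hx
    · rfl
    · refine SimpleGraph.Adj.reachable ⟨hx, ?_⟩
      rwa [max_eq_right (Fin.le_def.mpr (by simp only [last]; omega))]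
  have : Nonempty (Fin cs.length) := ⟨last⟩
  exact SimpleGraph.Connected.mk fun x y => (hreach x).trans (hreach y).symm

lemma thresholdGraph_card_le_rootMultiplicity {cs : List Bool} (hc : cs.getLast? = some true)
    {ι : Type*} [Fintype ι] {f g : ι → Fin cs.length} (hf : Function.Injective f)
    (hfg : ∀ s t, f s ≠ g t) (hgf : ∀ s, g s ≤ f s)
    (hrun : ∀ s (k : ℕ), g s ≤ k → k ≤ f s → cs[k]? = some false) :
    Fintype.card ι ≤ (distMatrix (thresholdGraph cs)).charpoly.rootMultiplicity (-2) :=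
  card_le_rootMultiplicity_charpoly _ _ (linearIndependent_single_sub_single hf hfg) fun s =>
    distMatrix_mulVec_single_sub_single (thresholdGraph_connected hc).preconnected (hfg s s)
      (thresholdGraph_neighborSet_eq (hgf s) (hrun s)).symm

lemma sum_le_rootMultiplicity_charpoly_distMatrix_blockSeq {l : List ℕ} {b : Bool}
    (hlast : (blockSeq l b).getLast? = some true) {κ : Type*} [Fintype κ] {blk : κ → ℕ}
    (hblk : Function.Injective blk) (hlt : ∀ i, blk i < l.length)
    (hfalse : ∀ i, (if Even (blk i) then b else !b) = false) :
    ∑ i, (l[blk i]'(hlt i) - 1) ≤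
      (distMatrix (thresholdGraph (blockSeq l b))).charpoly.rootMultiplicity (-2) := by
  have hbit (i : κ) (k : ℕ) (hk : k < l[blk i]'(hlt i)) :
      (blockSeq l b)[(l.take (blk i)).sum + k]? = some false := by
    rw [getElem?_blockSeq l b (hlt i) hk, hfalse]
  let pos (i : κ) (k : ℕ) (hk : k < l[blk i]'(hlt i)) : Fin (blockSeq l b).length :=
    ⟨_, (List.getElem?_eq_some_iff.mp (hbit i k hk)).1⟩
  have hpos_inj {i i' : κ} {k k'} (hk : k < l[blk i]'(hlt i)) (hk' : k' < l[blk i']'(hlt i'))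
      (h : pos i k hk = pos i' k' hk') : i = i' ∧ k = k' :=
    (List.sum_take_add_inj (hlt i) (hlt i') hk hk' (Fin.val_eq_of_eq h)).imp_left (@hblk i i')
  have hk_succ {i : κ} (k : Fin (l[blk i]'(hlt i) - 1)) : (k : ℕ) + 1 < l[blk i]'(hlt i) := by
    omega
  have hblock_pos (s : Σ i, Fin (l[blk i]'(hlt i) - 1)) : 0 < l[blk s.1]'(hlt s.1) :=
    (Nat.succ_pos _).trans (hk_succ s.2)
  -- every vertex of a zero block other than the first is paired with the first one
  let f (s : Σ i, Fin (l[blk i]'(hlt i) - 1)) := pos s.1 (s.2 + 1) (hk_succ s.2)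
  let g (s : Σ i, Fin (l[blk i]'(hlt i) - 1)) := pos s.1 0 (hblock_pos s)
  have hf : Function.Injective f := by
    rintro ⟨i, k⟩ ⟨i', k'⟩ h
    obtain ⟨rfl, hkk'⟩ := hpos_inj (hk_succ k) (hk_succ k') h
    obtain rfl : k = k' := Fin.ext (by simpa using hkk')
    rfl
  have hfg (s t) : f s ≠ g t := fun h =>
    Nat.succ_ne_zero _ (hpos_inj (hk_succ s.2) (hblock_pos t) h).2
  have hgf (s) : g s ≤ f s := Fin.le_def.mpr (by simp [f, g, pos])
  have hrun (s) (k : ℕ) (hgk : g s ≤ k) (hkf : k ≤ f s) : (blockSeq l b)[k]? = some false := by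
    simp only [f, g, pos] at hgk hkf
    have := hbit s.1 (k - (l.take (blk s.1)).sum) (by have := hk_succ s.2; omega)
    rwa [Nat.add_sub_cancel' (by omega)] at this
  simpa [Fintype.card_sigma] using thresholdGraph_card_le_rootMultiplicity hlast hf hfg hgf hrun

/-- For a connected threshold graph `G = (0^{a_1} 1^{a_2} ⋯ 0^{a_{2m-1}} 1^{a_{2m}})`,
the multiplicity of -2 as an eigenvalue of the distance matrix is at least
`∑ (a_{2i-1} - 1)` over the odd-indexed blocks. -/
theorem mult_neg_two_ge (m : ℕ) (hm : 0 < m) (a : ℕ → ℕ)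
    (ha : ∀ i, 1 ≤ i → i ≤ 2 * m → 0 < a i)
    (c : List Bool) (hc : c = blockSeq ((List.range (2 * m)).map fun i => a (i + 1)) false) :
    ∑ i ∈ Finset.range m, (a (2 * i + 1) - 1) ≤
      Polynomial.rootMultiplicity (-2 : ℝ)
        (Matrix.charpoly (distMatrix (thresholdGraph c))) := by
  set l := (List.range (2 * m)).map fun i => a (i + 1)
  subst hc
  have hlen : l.length = 2 * m := by simp [l]
  have hget (j : ℕ) (hj : j < l.length) : l[j] = a (j + 1) := by simp [l]
  have hlast : (blockSeq l false).getLast? = some true := by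
    have hl : l ≠ [] := List.ne_nil_of_length_pos (by omega)
    rw [getLast?_blockSeq l false hl
      (by rw [List.getLast_eq_getElem, hget]; exact ha _ (by omega) (by omega))]
    have : ¬ Even (2 * m - 1) := by rw [Nat.not_even_iff_odd]; exact ⟨m - 1, by omega⟩
    simp [hlen, this]
  have := sum_le_rootMultiplicity_charpoly_distMatrix_blockSeq hlast (κ := Fin m)
    (blk := fun i => 2 * i) (fun i j h => Fin.ext (by simpa using h)) (fun i => by omega) (by simp)
  simpa [hget, Fin.sum_univ_eq_sum_range (fun i => a (2 * i + 1) - 1)] using this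
end

section
/- Let a = (a_1,...,a_n) be positive integers, and define γ_{n,l}^a as the sum of products a_{t_1}···a_{t_l} over increasing sequences t_1 < ... < t_l in {1,...,n} that alternate in parity and end with t_l ≡ n (mod 2) (with γ_{n,0}^a = 1). Then γ_{n,2}^a + γ_{n-1,2}^a = γ_{n,1}^a · γ_{n-1,1}^a. -/
/-- `gamma n l a` is the sum, over strictly increasing sequences `t` of length `l`
in `[n] = {1,…,n}` (1-based) with `t i ≡ n + i - l (mod 2)` (parity-alternating,
ending with the parity of `n`), of the products `a (t 1) ⋯ a (t l)`. -/
def gamma (n l : ℕ) (a : ℕ → ℕ) : ℕ :=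
  ∑ t ∈ Finset.univ.filter (fun t : Fin l → Fin n =>
      (∀ i j : Fin l, i < j → t i < t j) ∧
      ∀ i : Fin l, ((t i : ℕ) + 1) % 2 = (n + ((i : ℕ) + 1) + l) % 2),
    ∏ i, a ((t i : ℕ) + 1)

lemma gamma_one (n : ℕ) (a : ℕ → ℕ) :
    gamma n 1 a = ∑ i ∈ (Finset.range n).filter (fun i => (i + 1) % 2 = n % 2), a (i + 1) := by
  unfold gamma
  rw [Finset.sum_filter, Finset.sum_filter]
  rw [← Fin.sum_univ_eq_sum_range (fun i => if (i + 1) % 2 = n % 2 then a (i + 1) else 0) n]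
  apply Fintype.sum_equiv (Equiv.funUnique (Fin 1) (Fin n))
  intro t
  simp [Equiv.funUnique, Fin.forall_fin_one, Fin.prod_univ_one]
  have : (n + (0 + 1) + 1) % 2 = n % 2 := by omega
  rw [this]

lemma gamma_two (n : ℕ) (a : ℕ → ℕ) :
    gamma n 2 a = ∑ p ∈ ((Finset.range n ×ˢ Finset.range n).filter
        (fun p => p.1 < p.2 ∧ (p.1 + 1) % 2 = (n + 1) % 2 ∧ (p.2 + 1) % 2 = n % 2)),
      a (p.1 + 1) * a (p.2 + 1) := by
  unfold gamma
  refine Finset.sum_bij' (i := fun t _ => (((t 0 : Fin n) : ℕ), ((t 1 : Fin n) : ℕ)))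
    (j := fun p hp =>
      ![⟨p.1, Finset.mem_range.1 (Finset.mem_product.1 (Finset.mem_filter.1 hp).1).1⟩,
        ⟨p.2, Finset.mem_range.1 (Finset.mem_product.1 (Finset.mem_filter.1 hp).1).2⟩])
    ?_ ?_ ?_ ?_ ?_
  · intro t ht
    rw [Finset.mem_filter] at ht
    obtain ⟨-, hmono, hpar⟩ := ht
    have h01 : t 0 < t 1 := hmono 0 1 (by decide)
    have h0 := hpar 0
    have h1 := hpar 1
    simp only [Fin.val_zero, Fin.val_one] at h0 h1
    simp only [Finset.mem_filter, Finset.mem_product, Finset.mem_range]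
    refine ⟨⟨(t 0).isLt, (t 1).isLt⟩, h01, ?_, ?_⟩
    · omega
    · omega
  · intro p hp
    rw [Finset.mem_filter] at hp
    obtain ⟨-, hlt, h1, h2⟩ := hp
    simp only [Finset.mem_filter, Finset.mem_univ, true_and]
    constructor
    · intro i j hij
      fin_cases i <;> fin_cases j <;> simp_all [Fin.lt_def]
    · intro i
      fin_cases i <;> simp_all
  · intro t ht
    funext i
    fin_cases i <;> simp
  · intro p hp
    simp
  · intro t ht
    simp [Fin.prod_univ_two]

/-- `γ_{n,2} + γ_{n-1,2} = γ_{n,1} · γ_{n-1,1}`. -/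
theorem gamma_two_identity (n : ℕ) (hn : 2 ≤ n) (a : ℕ → ℕ) (ha : ∀ i, 0 < a i) :
    gamma n 2 a + gamma (n - 1) 2 a = gamma n 1 a * gamma (n - 1) 1 a := by
  obtain ⟨m, rfl⟩ : ∃ m, n = m + 2 := ⟨n - 2, by omega⟩
  have h1 : m + 2 - 1 = m + 1 := by omega
  rw [h1, gamma_one, gamma_one, gamma_two, gamma_two]
  rw [Finset.sum_mul_sum]
  rw [← Finset.sum_product']
  rw [← Finset.filter_product]
  rw [← Finset.sum_filter_add_sum_filter_not
    ((Finset.range (m + 2) ×ˢ Finset.range (m + 1)).filter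
      (fun p => (p.1 + 1) % 2 = (m + 2) % 2 ∧ (p.2 + 1) % 2 = (m + 1) % 2))
    (fun p => p.2 < p.1)]
  rw [Finset.filter_filter, Finset.filter_filter]
  congr 1
  · -- the pairs with `p.2 < p.1` correspond, after swapping, to `γ_{n,2}`
    refine Finset.sum_nbij' (i := Prod.swap) (j := Prod.swap) ?_ ?_ ?_ ?_ ?_
    · intro p hp
      simp only [Finset.mem_filter, Finset.mem_product, Finset.mem_range,
        Prod.fst_swap, Prod.snd_swap] at hp ⊢
      omega
    · intro p hp
      simp only [Finset.mem_filter, Finset.mem_product, Finset.mem_range,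
        Prod.fst_swap, Prod.snd_swap] at hp ⊢
      omega
    · intro p _; simp
    · intro p _; simp
    · intro p _
      simp [mul_comm]
  · -- the pairs with `¬ p.2 < p.1` are exactly those of `γ_{n-1,2}`
    apply Finset.sum_congr
    · ext p
      simp only [Finset.mem_filter, Finset.mem_product, Finset.mem_range]
      omega
    · intros; rfl
end

section
/- For α > 0, β > 0, and b_1 ≥ 2, the quartic polynomials Q^a(x) and Q^b(x) associated to the sequences a = (α+b_1, 2(α+β), β, 2(b_1−1)) and b = (b_1, 2β, α+β, 2α+2b_1−2) are identical as polynomials in x. -/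
/-- The quartic factor of the distance characteristic polynomial of the threshold
graph `(0^{c₁}1^{c₂}0^{c₃}1^{c₄})`. -/
def Qc (c₁ c₂ c₃ c₄ x : ℝ) : ℝ :=
  -x ^ 4 + (2 * c₁ + c₂ + 2 * c₃ + c₄ - 6) * x ^ 3
    + (8 * c₁ + 5 * c₂ + 8 * c₃ + 5 * c₄ - c₁ * c₂ - c₁ * c₄ + 2 * c₂ * c₃
        - c₃ * c₄ - 13) * x ^ 2
    + (10 * c₁ + 8 * c₂ + 10 * c₃ + 8 * c₄ - 3 * c₁ * c₂ - 3 * c₁ * c₄ + 6 * c₂ * c₃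
        - 3 * c₃ * c₄ - 2 * c₁ * c₂ * c₃ - c₂ * c₃ * c₄ - 12) * x
    + (4 * c₁ + 4 * c₂ + 4 * c₃ + 4 * c₄ - 2 * c₁ * c₂ - 2 * c₁ * c₄ + 4 * c₂ * c₃
        - 2 * c₃ * c₄ - 2 * c₁ * c₂ * c₃ - 2 * c₂ * c₃ * c₄ + c₁ * c₂ * c₃ * c₄ - 4)

/-- For `α, β > 0` and `b₁ ≥ 2`, the quartics associated to
`a = (α+b₁, 2(α+β), β, 2(b₁−1))` and `b = (b₁, 2β, α+β, 2α+2b₁−2)` coincide. -/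
theorem Q_eq_of_family (α β b₁ : ℕ) (hα : 0 < α) (hβ : 0 < β) (hb : 2 ≤ b₁) :
    ∀ x : ℝ,
      Qc ((α : ℝ) + b₁) (2 * ((α : ℝ) + β)) (β : ℝ) (2 * ((b₁ : ℝ) - 1)) x =
      Qc (b₁ : ℝ) (2 * (β : ℝ)) ((α : ℝ) + β) (2 * (α : ℝ) + 2 * b₁ - 2) x := by
  intro x; simp only [Qc]; ring
end
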